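/- For all integers c ≥ 0 and i ≥ 0, setting k = c + i, the average-case PAR with respect to party 2 of the bounded-bisection-auction tiling T_{c,i} for the function A_k equals (c+5)/4 − 1/2^{c+2} + c/2^{k+2}. -/

import Mathlib

open Finset

/-- The value space `{0,…,2^k−1} × {0,…,2^k−1}`. -/
def Vk (k : ℕ) : Finset (ℕ × ℕ) := Finset.range (2 ^ k) ×ˢ Finset.range (2 ^ k)

/-- A tiling of `Vk k`: a finite collection of nonempty rectangles partitioning `Vk k`. -/
def IsTiling (k : ℕ) (T : Finset (Finset (ℕ × ℕ))) : Prop :=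
  (∀ R ∈ T, ∃ S S' : Finset ℕ, R = S ×ˢ S') ∧
    (∀ R ∈ T, R.Nonempty) ∧ (∀ R ∈ T, R ⊆ Vk k) ∧ ∀ x ∈ Vk k, ∃! R, R ∈ T ∧ x ∈ R

/-- `f`-monochromaticity of a tiling. -/
def Mono {β : Type} (f : ℕ × ℕ → β) (T : Finset (Finset (ℕ × ℕ))) : Prop :=
  ∀ R ∈ T, ∀ x ∈ R, ∀ y ∈ R, f x = f y

/-- The tile of `T` containing `x` (union of all tiles containing `x`; for a
tiling this is exactly the unique tile containing `x`). -/
def tileOf (T : Finset (Finset (ℕ × ℕ))) (x : ℕ × ℕ) : Finset (ℕ × ℕ) :=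
  (T.filter fun R => x ∈ R).sup id

/-- The ideal region of `x`: the level set of `f x` inside `Vk k`. -/
def ideal {β : Type} [DecidableEq β] (k : ℕ) (f : ℕ × ℕ → β) (x : ℕ × ℕ) : Finset (ℕ × ℕ) :=
  (Vk k).filter fun y => f y = f x

/-- Average-case objective PAR of a tiling w.r.t. the uniform distribution. -/
def avgObjPAR {β : Type} [DecidableEq β] (k : ℕ) (f : ℕ × ℕ → β)
    (T : Finset (Finset (ℕ × ℕ))) : ℚ :=
  (∑ x ∈ Vk k, ((ideal k f x).card : ℚ) / ((tileOf T x).card : ℚ)) / 2 ^ (2 * k)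

/-- Average-case PAR with respect to party 1. -/
def avgPAR1 {β : Type} [DecidableEq β] (k : ℕ) (f : ℕ × ℕ → β)
    (T : Finset (Finset (ℕ × ℕ))) : ℚ :=
  (∑ x ∈ Vk k,
      (((Finset.range (2 ^ k)).filter fun y => f (x.1, y) = f x).card : ℚ) /
        (((Finset.range (2 ^ k)).filter fun y => (x.1, y) ∈ tileOf T x).card : ℚ)) /
    2 ^ (2 * k)

/-- Average-case PAR with respect to party 2. -/
def avgPAR2 {β : Type} [DecidableEq β] (k : ℕ) (f : ℕ × ℕ → β)
    (T : Finset (Finset (ℕ × ℕ))) : ℚ :=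
  (∑ x ∈ Vk k,
      (((Finset.range (2 ^ k)).filter fun y => f (y, x.2) = f x).card : ℚ) /
        (((Finset.range (2 ^ k)).filter fun y => (y, x.2) ∈ tileOf T x).card : ℚ)) /
    2 ^ (2 * k)

/-- The millionaires function: `1` if `x1 ≥ x2`, else `2`. -/
def Mil (x : ℕ × ℕ) : ℕ := if x.2 ≤ x.1 then 1 else 2

/-- The second-price auction function. -/
def Auc (x : ℕ × ℕ) : ℕ × ℕ := if x.2 ≤ x.1 then (1, x.2) else (2, x.1)

/-- Translate a tile by `(a, a)`. -/
def shiftTile (a : ℕ) (R : Finset (ℕ × ℕ)) : Finset (ℕ × ℕ) :=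
  R.image fun p => (p.1 + a, p.2 + a)

/-- The bisection-protocol tiling `B_k`. -/
def Btile : ℕ → Finset (Finset (ℕ × ℕ))
  | 0 => {{(0, 0)}}
  | j + 1 =>
    Btile j ∪ (Btile j).image (shiftTile (2 ^ j)) ∪
      {Finset.range (2 ^ j) ×ˢ Finset.Ico (2 ^ j) (2 ^ (j + 1)),
        Finset.Ico (2 ^ j) (2 ^ (j + 1)) ×ˢ Finset.range (2 ^ j)}

/-- The bounded-bisection-auction tiling `T_{c,i}`. -/
def BBA : ℕ → ℕ → Finset (Finset (ℕ × ℕ))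
  | 0, i =>
    (Finset.range (2 ^ i)).image (fun p => Finset.Ico p (2 ^ i) ×ˢ ({p} : Finset ℕ)) ∪
      (Finset.range (2 ^ i - 1)).image fun p => ({p} : Finset ℕ) ×ˢ Finset.Ico (p + 1) (2 ^ i)
  | c + 1, i =>
    BBA c i ∪ (BBA c i).image (shiftTile (2 ^ (c + i))) ∪
      (Finset.range (2 ^ (c + i))).image
        (fun j => Finset.Ico (2 ^ (c + i)) (2 ^ (c + i + 1)) ×ˢ ({j} : Finset ℕ)) ∪
      (Finset.range (2 ^ (c + i))).image fun j =>
        ({j} : Finset ℕ) ×ˢ Finset.Ico (2 ^ (c + i)) (2 ^ (c + i + 1))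

/-- The public-good function: `true` iff `x1 + x2 ≥ 2^k − 1` ("Build"). -/
def PG (k : ℕ) (x : ℕ × ℕ) : Bool := decide (2 ^ k - 1 ≤ x.1 + x.2)

/-- The truthful public-good function: `none` = "Do Not Build". -/
def TPG (c : ℕ) (x : ℕ × ℕ) : Option (ℕ × ℕ) :=
  if x.1 + x.2 < c then none else some (c - x.2, c - x.1)

/-- The tiling of `Vk k` into singleton cells (sealed-bid auction). -/
def sealedTiling (k : ℕ) : Finset (Finset (ℕ × ℕ)) :=
  (Vk k).image fun x => ({x} : Finset (ℕ × ℕ))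

/-!
The tile of `T_{c+1,i}` containing a point is read off from its quadrant of side `m = 2^{c+i}`:
on the two diagonal quadrants it is the (translated) tile of `T_{c,i}`, on the lower-right quadrant
`x₂ < m ≤ x₁` it is a row segment of width `m`, and on the upper-left one a column, of row width
`1`. Splitting the party-2 sum of ratios over the four quadrants therefore gives a linear
recursion in `c`. It also involves the sum of inverse row widths below the diagonal, which counts
the tiles there and satisfies its own recursion. For `c = 0` every ratio is `1`; solving the
recursions gives the closed form.
-/

lemma mem_Vk {k : ℕ} {x : ℕ × ℕ} : x ∈ Vk k ↔ x.1 < 2 ^ k ∧ x.2 < 2 ^ k := by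
  simp [Vk]

lemma card_Vk (k : ℕ) : #(Vk k) = 2 ^ k * 2 ^ k := by
  simp [Vk]

lemma sum_Vk_succ {M : Type*} [AddCommMonoid M] (k : ℕ) (f : ℕ × ℕ → M) :
    ∑ x ∈ Vk (k + 1), f x = ∑ x ∈ Vk k, (f x + f (x.1 + 2 ^ k, x.2 + 2 ^ k) +
      f (x.1 + 2 ^ k, x.2) + f (x.1, x.2 + 2 ^ k)) := by
  simp only [Vk, sum_product, pow_succ, mul_two, sum_range_add, sum_add_distrib]
  simp only [add_comm (2 ^ k)]
  abel

lemma sum_snd_Vk (k : ℕ) : ∑ x ∈ Vk k, (x.2 : ℚ) = 2 ^ k * (2 ^ k * (2 ^ k - 1) / 2) := by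
  have gauss := congrArg (Nat.cast : ℕ → ℚ) (sum_range_id_mul_two (2 ^ k))
  push_cast [Nat.cast_sub Nat.one_le_two_pow] at gauss
  simp only [Vk, sum_product, sum_const, card_range, nsmul_eq_mul]
  push_cast
  rw [← gauss]
  ring

lemma mem_tileOf {T : Finset (Finset (ℕ × ℕ))} {x p : ℕ × ℕ} :
    p ∈ tileOf T x ↔ ∃ R ∈ T, x ∈ R ∧ p ∈ R := by
  simp [tileOf, and_assoc]

lemma tileOf_union (A B : Finset (Finset (ℕ × ℕ))) (x : ℕ × ℕ) :
    tileOf (A ∪ B) x = tileOf A x ∪ tileOf B x := by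
  ext p
  simp only [mem_tileOf, mem_union, or_and_right, exists_or]

lemma tileOf_eq_empty {T : Finset (Finset (ℕ × ℕ))} {x : ℕ × ℕ} (h : ∀ R ∈ T, x ∉ R) :
    tileOf T x = ∅ := by
  ext p
  simp only [mem_tileOf, notMem_empty, iff_false, not_exists, not_and]
  exact fun R hR hx => absurd hx (h R hR)

lemma tileOf_subset {T : Finset (Finset (ℕ × ℕ))} {s : Finset (ℕ × ℕ)} (h : ∀ R ∈ T, R ⊆ s)
    (x : ℕ × ℕ) : tileOf T x ⊆ s := fun _ hp => by
  obtain ⟨R, hR, -, hpR⟩ := mem_tileOf.1 hp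
  exact h R hR hpR

lemma tileOf_image_row (J : Finset ℕ) (F : ℕ → Finset ℕ) (x : ℕ × ℕ) :
    tileOf (J.image fun j => F j ×ˢ {j}) x =
      if x.2 ∈ J ∧ x.1 ∈ F x.2 then F x.2 ×ˢ {x.2} else ∅ := by
  ext p
  simp only [mem_tileOf, mem_image, exists_exists_and_eq_and, mem_product, mem_singleton]
  split_ifs with h <;> simp only [mem_product, mem_singleton, notMem_empty] <;> aesop

lemma tileOf_image_col (J : Finset ℕ) (F : ℕ → Finset ℕ) (x : ℕ × ℕ) :
    tileOf (J.image fun j => {j} ×ˢ F j) x =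
      if x.1 ∈ J ∧ x.2 ∈ F x.1 then {x.1} ×ˢ F x.1 else ∅ := by
  ext p
  simp only [mem_tileOf, mem_image, exists_exists_and_eq_and, mem_product, mem_singleton]
  split_ifs with h <;> simp only [mem_product, mem_singleton, notMem_empty] <;> aesop

lemma mem_shiftTile {a : ℕ} {R : Finset (ℕ × ℕ)} {p : ℕ × ℕ} :
    p ∈ shiftTile a R ↔ a ≤ p.1 ∧ a ≤ p.2 ∧ (p.1 - a, p.2 - a) ∈ R := by
  simp only [shiftTile, mem_image, Prod.exists]
  constructor
  · rintro ⟨u, v, h, rfl⟩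
    simpa using h
  · rintro ⟨h1, h2, h⟩
    exact ⟨_, _, h, by ext <;> simp <;> omega⟩

lemma add_mem_shiftTile {a : ℕ} {R : Finset (ℕ × ℕ)} {p : ℕ × ℕ} :
    (p.1 + a, p.2 + a) ∈ shiftTile a R ↔ p ∈ R := by
  simp [mem_shiftTile]

lemma notMem_image_shiftTile_of_lt {T : Finset (Finset (ℕ × ℕ))} {a : ℕ} {x : ℕ × ℕ}
    (hx : x.1 < a ∨ x.2 < a) : ∀ R ∈ T.image (shiftTile a), x ∉ R := by
  simp only [mem_image, forall_exists_index, and_imp, forall_apply_eq_imp_iff₂, mem_shiftTile]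
  omega

lemma tileOf_image_shiftTile (T : Finset (Finset (ℕ × ℕ))) (a : ℕ) (x : ℕ × ℕ) :
    tileOf (T.image (shiftTile a)) (x.1 + a, x.2 + a) = shiftTile a (tileOf T x) := by
  ext p
  simp only [mem_tileOf, mem_image, exists_exists_and_eq_and, add_mem_shiftTile,
    mem_shiftTile (p := p)]
  aesop

def rowWidth (k : ℕ) (T : Finset (Finset (ℕ × ℕ))) (x : ℕ × ℕ) : ℕ :=
  #{y ∈ range (2 ^ k) | (y, x.2) ∈ tileOf T x}

lemma filter_range_mem_eq_of_subset_Vk {R : Finset (ℕ × ℕ)} {k N : ℕ} (hR : R ⊆ Vk k)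
    (hN : 2 ^ k ≤ N) (b : ℕ) :
    {y ∈ range N | (y, b) ∈ R} = {y ∈ range (2 ^ k) | (y, b) ∈ R} := by
  ext y
  simp only [mem_filter, mem_range]
  exact ⟨fun h => ⟨(mem_Vk.1 (hR h.2)).1, h.2⟩, fun h => ⟨by omega, h.2⟩⟩

lemma card_filter_mem_prod_singleton {S : Finset ℕ} {N : ℕ} (hS : S ⊆ range N) (b : ℕ) :
    #{y ∈ range N | (y, b) ∈ S ×ˢ {b}} = #S := by
  congr 1
  ext y
  simp only [mem_filter, mem_product, mem_singleton, and_true]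
  exact ⟨And.right, fun h => ⟨hS h, h⟩⟩

lemma card_filter_mem_singleton_prod {S : Finset ℕ} {N a b : ℕ} (ha : a < N) (hb : b ∈ S) :
    #{y ∈ range N | (y, b) ∈ {a} ×ˢ S} = 1 := by
  rw [card_eq_one]
  exact ⟨a, by ext y; simp [hb]; omega⟩

lemma card_filter_Auc_eq {k : ℕ} {x : ℕ × ℕ} (hx : x ∈ Vk k) :
    #{y ∈ range (2 ^ k) | Auc (y, x.2) = Auc x} = if x.2 ≤ x.1 then 2 ^ k - x.2 else 1 := by
  rw [mem_Vk] at hx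
  split_ifs with h
  · rw [← Nat.card_Ico]
    congr 1
    ext y
    by_cases hy : x.2 ≤ y <;> simp [Auc, h, hy]
  · rw [card_eq_one]
    refine ⟨x.1, ?_⟩
    ext y
    by_cases hy : x.2 ≤ y <;> simp [Auc, h, hy] <;> omega

def aucPAR2Sum (k : ℕ) (T : Finset (Finset (ℕ × ℕ))) : ℚ :=
  ∑ x ∈ Vk k, (if x.2 ≤ x.1 then (2 ^ k - x.2 : ℚ) else 1) / rowWidth k T x

def lowerInvWidthSum (k : ℕ) (T : Finset (Finset (ℕ × ℕ))) : ℚ :=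
  ∑ x ∈ Vk k, if x.2 ≤ x.1 then (rowWidth k T x : ℚ)⁻¹ else 0

lemma avgPAR2_Auc (k : ℕ) (T : Finset (Finset (ℕ × ℕ))) :
    avgPAR2 k Auc T = aucPAR2Sum k T / 2 ^ (2 * k) := by
  rw [avgPAR2, aucPAR2Sum]
  congr 1
  refine sum_congr rfl fun x hx => ?_
  rw [card_filter_Auc_eq hx, ← rowWidth]
  split_ifs with h
  · rw [Nat.cast_sub (mem_Vk.1 hx).2.le]; push_cast; ring
  · rfl

lemma BBA_subset_Vk (c i : ℕ) : ∀ R ∈ BBA c i, R ⊆ Vk (c + i) := by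
  induction c with
  | zero =>
    rw [Nat.zero_add]
    simp only [BBA, mem_union, mem_image, mem_range]
    rintro R (⟨j, hj, rfl⟩ | ⟨j, hj, rfl⟩) p hp <;>
      simp only [mem_product, mem_Ico, mem_singleton] at hp <;> rw [mem_Vk] <;> omega
  | succ c ih =>
    have hpow : 2 ^ (c + 1 + i) = 2 ^ (c + i) + 2 ^ (c + i) := by
      rw [Nat.add_right_comm, pow_succ]; omega
    simp only [BBA, mem_union, mem_image, mem_range]
    rintro R (((hR | ⟨R, hR, rfl⟩) | ⟨j, hj, rfl⟩) | ⟨j, hj, rfl⟩) p hp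
    · have := mem_Vk.1 (ih R hR hp)
      rw [mem_Vk]; omega
    · obtain ⟨h1, h2, hR'⟩ := mem_shiftTile.1 hp
      have := mem_Vk.1 (ih R hR hR')
      rw [mem_Vk]; omega
    all_goals simp only [mem_product, mem_Ico, mem_singleton] at hp; rw [mem_Vk]; omega

lemma notMem_BBA_of_notMem_Vk {c i : ℕ} {x : ℕ × ℕ} (hx : x ∉ Vk (c + i)) :
    ∀ R ∈ BBA c i, x ∉ R :=
  fun R hR hxR => hx (BBA_subset_Vk c i R hR hxR)

lemma tileOf_BBA_subset_Vk (c i : ℕ) (x : ℕ × ℕ) : tileOf (BBA c i) x ⊆ Vk (c + i) :=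
  tileOf_subset (BBA_subset_Vk c i) x

lemma tileOf_BBA_zero (i : ℕ) {x : ℕ × ℕ} (hx : x ∈ Vk i) :
    tileOf (BBA 0 i) x =
      if x.2 ≤ x.1 then Ico x.2 (2 ^ i) ×ˢ {x.2} else {x.1} ×ˢ Ico (x.1 + 1) (2 ^ i) := by
  rw [mem_Vk] at hx
  rw [BBA, tileOf_union, tileOf_image_row, tileOf_image_col]
  simp only [mem_range, mem_Ico]
  by_cases h : x.2 ≤ x.1
  · rw [if_pos h, if_pos (by omega), if_neg (by omega), union_empty]
  · rw [if_neg h, if_neg (by omega), if_pos (by omega), empty_union]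

lemma rowWidth_BBA_zero (i : ℕ) {x : ℕ × ℕ} (hx : x ∈ Vk i) :
    rowWidth i (BBA 0 i) x = if x.2 ≤ x.1 then 2 ^ i - x.2 else 1 := by
  rw [rowWidth, tileOf_BBA_zero i hx]
  rw [mem_Vk] at hx
  split_ifs with h
  · rw [card_filter_mem_prod_singleton
      (fun y hy => by simp only [mem_Ico, mem_range] at hy ⊢; omega), Nat.card_Ico]
  · exact card_filter_mem_singleton_prod hx.1 (by simp; omega)

section succ

variable (c i : ℕ) {x : ℕ × ℕ}

lemma tileOf_BBA_succ_ll (hx : x ∈ Vk (c + i)) :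
    tileOf (BBA (c + 1) i) x = tileOf (BBA c i) x := by
  rw [mem_Vk] at hx
  rw [BBA, tileOf_union, tileOf_union, tileOf_union, tileOf_image_row, tileOf_image_col,
    tileOf_eq_empty (notMem_image_shiftTile_of_lt (by omega))]
  simp only [mem_range, mem_Ico]
  rw [if_neg (by omega), if_neg (by omega)]
  simp

lemma tileOf_BBA_succ_ur :
    tileOf (BBA (c + 1) i) (x.1 + 2 ^ (c + i), x.2 + 2 ^ (c + i)) =
      shiftTile (2 ^ (c + i)) (tileOf (BBA c i) x) := by
  rw [BBA, tileOf_union, tileOf_union, tileOf_union, tileOf_image_row, tileOf_image_col,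
    tileOf_image_shiftTile, tileOf_eq_empty (notMem_BBA_of_notMem_Vk (by simp [mem_Vk]))]
  simp only [mem_range, mem_Ico]
  rw [if_neg (by omega), if_neg (by omega)]
  simp

lemma tileOf_BBA_succ_lr (hx : x ∈ Vk (c + i)) :
    tileOf (BBA (c + 1) i) (x.1 + 2 ^ (c + i), x.2) =
      Ico (2 ^ (c + i)) (2 ^ (c + i + 1)) ×ˢ {x.2} := by
  rw [mem_Vk] at hx
  have := pow_succ 2 (c + i)
  rw [BBA, tileOf_union, tileOf_union, tileOf_union, tileOf_image_row, tileOf_image_col,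
    tileOf_eq_empty (notMem_BBA_of_notMem_Vk (by simp [mem_Vk])),
    tileOf_eq_empty (notMem_image_shiftTile_of_lt (by omega))]
  simp only [mem_range, mem_Ico]
  rw [if_pos (by omega), if_neg (by omega)]
  simp

lemma tileOf_BBA_succ_ul (hx : x ∈ Vk (c + i)) :
    tileOf (BBA (c + 1) i) (x.1, x.2 + 2 ^ (c + i)) =
      {x.1} ×ˢ Ico (2 ^ (c + i)) (2 ^ (c + i + 1)) := by
  rw [mem_Vk] at hx
  have := pow_succ 2 (c + i)
  rw [BBA, tileOf_union, tileOf_union, tileOf_union, tileOf_image_row, tileOf_image_col,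
    tileOf_eq_empty (notMem_BBA_of_notMem_Vk (by simp [mem_Vk])),
    tileOf_eq_empty (notMem_image_shiftTile_of_lt (by omega))]
  simp only [mem_range, mem_Ico]
  rw [if_neg (by omega), if_pos (by omega)]
  simp

lemma rowWidth_BBA_succ_ll (hx : x ∈ Vk (c + i)) :
    rowWidth (c + i + 1) (BBA (c + 1) i) x = rowWidth (c + i) (BBA c i) x := by
  rw [rowWidth, rowWidth, tileOf_BBA_succ_ll c i hx,
    filter_range_mem_eq_of_subset_Vk (tileOf_BBA_subset_Vk c i x) (by simp [pow_succ])]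

lemma rowWidth_BBA_succ_ur :
    rowWidth (c + i + 1) (BBA (c + 1) i) (x.1 + 2 ^ (c + i), x.2 + 2 ^ (c + i)) =
      rowWidth (c + i) (BBA c i) x := by
  rw [rowWidth, rowWidth, tileOf_BBA_succ_ur,
    ← card_image_of_injective {y ∈ range (2 ^ (c + i)) | (y, x.2) ∈ tileOf (BBA c i) x}
      (add_left_injective (2 ^ (c + i)))]
  congr 1
  ext y
  simp only [mem_filter, mem_range, mem_image, mem_shiftTile, pow_succ]
  constructor
  · rintro ⟨-, hm, -, h⟩
    rw [Nat.add_sub_cancel] at h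
    exact ⟨y - 2 ^ (c + i), ⟨(mem_Vk.1 (tileOf_BBA_subset_Vk c i x h)).1, h⟩, by omega⟩
  · rintro ⟨z, ⟨hz, h⟩, rfl⟩
    exact ⟨by omega, by omega, by omega, by simpa using h⟩

lemma rowWidth_BBA_succ_lr (hx : x ∈ Vk (c + i)) :
    rowWidth (c + i + 1) (BBA (c + 1) i) (x.1 + 2 ^ (c + i), x.2) = 2 ^ (c + i) := by
  rw [rowWidth, tileOf_BBA_succ_lr c i hx,
    card_filter_mem_prod_singleton
      (fun y hy => by simp only [mem_Ico, mem_range] at hy ⊢; omega), Nat.card_Ico, pow_succ]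
  omega

lemma rowWidth_BBA_succ_ul (hx : x ∈ Vk (c + i)) :
    rowWidth (c + i + 1) (BBA (c + 1) i) (x.1, x.2 + 2 ^ (c + i)) = 1 := by
  rw [mem_Vk] at hx
  rw [rowWidth, tileOf_BBA_succ_ul c i (mem_Vk.2 hx)]
  exact card_filter_mem_singleton_prod (by rw [pow_succ]; omega) (by simp [pow_succ]; omega)

end succ

lemma lowerInvWidthSum_BBA_zero (i : ℕ) : lowerInvWidthSum i (BBA 0 i) = 2 ^ i := by
  rw [lowerInvWidthSum, Vk, sum_product_right]
  calc ∑ b ∈ range (2 ^ i), ∑ a ∈ range (2 ^ i),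
        (if b ≤ a then (rowWidth i (BBA 0 i) (a, b) : ℚ)⁻¹ else 0)
      = ∑ b ∈ range (2 ^ i), (1 : ℚ) := by
        refine sum_congr rfl fun b hb => ?_
        have hb := mem_range.1 hb
        have hfilter : {a ∈ range (2 ^ i) | b ≤ a} = Ico b (2 ^ i) := by
          ext a; simp only [mem_filter, mem_range, mem_Ico]; omega
        have hterm : ∀ a ∈ Ico b (2 ^ i), (rowWidth i (BBA 0 i) (a, b) : ℚ)⁻¹ =
            ((2 ^ i - b : ℕ) : ℚ)⁻¹ := fun a ha => by
          rw [mem_Ico] at ha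
          rw [rowWidth_BBA_zero i (mem_Vk.2 ⟨ha.2, hb⟩), if_pos ha.1]
        rw [← sum_filter, hfilter, sum_congr rfl hterm, sum_const, Nat.card_Ico, nsmul_eq_mul,
          mul_inv_cancel₀ (by exact_mod_cast (Nat.sub_pos_of_lt hb).ne')]
    _ = 2 ^ i := by simp

lemma aucPAR2Sum_BBA_zero (i : ℕ) : aucPAR2Sum i (BBA 0 i) = 2 ^ i * 2 ^ i := by
  rw [aucPAR2Sum]
  calc ∑ x ∈ Vk i, (if x.2 ≤ x.1 then (2 ^ i - x.2 : ℚ) else 1) / rowWidth i (BBA 0 i) x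
      = ∑ x ∈ Vk i, (1 : ℚ) := by
        refine sum_congr rfl fun x hx => ?_
        rw [rowWidth_BBA_zero i hx]
        have hb := mem_Vk.1 hx
        split_ifs
        · have : (x.2 : ℚ) < 2 ^ i := by exact_mod_cast hb.2
          push_cast [Nat.cast_sub hb.2.le]
          exact div_self (sub_ne_zero.2 this.ne')
        · simp
    _ = 2 ^ i * 2 ^ i := by simp [card_Vk]

lemma lowerInvWidthSum_BBA_succ (c i : ℕ) :
    lowerInvWidthSum (c + i + 1) (BBA (c + 1) i) =
      2 * lowerInvWidthSum (c + i) (BBA c i) + 2 ^ (c + i) := by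
  have hm : (2 : ℚ) ^ (c + i) ≠ 0 := by positivity
  calc lowerInvWidthSum (c + i + 1) (BBA (c + 1) i)
      = ∑ x ∈ Vk (c + i), (2 * (if x.2 ≤ x.1 then (rowWidth (c + i) (BBA c i) x : ℚ)⁻¹ else 0)
          + ((2 : ℚ) ^ (c + i))⁻¹) := by
        rw [lowerInvWidthSum, sum_Vk_succ]
        refine sum_congr rfl fun x hx => ?_
        have hb := mem_Vk.1 hx
        simp only [rowWidth_BBA_succ_ll c i hx, rowWidth_BBA_succ_ur, rowWidth_BBA_succ_lr c i hx,
          rowWidth_BBA_succ_ul c i hx, add_le_add_iff_right]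
        rw [if_pos (show x.2 ≤ x.1 + 2 ^ (c + i) by omega),
          if_neg (show ¬ x.2 + 2 ^ (c + i) ≤ x.1 by omega)]
        push_cast
        ring
    _ = 2 * lowerInvWidthSum (c + i) (BBA c i) + 2 ^ (c + i) := by
        rw [sum_add_distrib, ← mul_sum, sum_const, card_Vk, lowerInvWidthSum, nsmul_eq_mul]
        push_cast
        field_simp

lemma aucPAR2Sum_BBA_succ (c i : ℕ) :
    aucPAR2Sum (c + i + 1) (BBA (c + 1) i) =
      2 * aucPAR2Sum (c + i) (BBA c i) + 2 ^ (c + i) * lowerInvWidthSum (c + i) (BBA c i) +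
        (5 * 2 ^ (c + i) * 2 ^ (c + i) + 2 ^ (c + i)) / 2 := by
  have hm : (2 : ℚ) ^ (c + i) ≠ 0 := by positivity
  calc aucPAR2Sum (c + i + 1) (BBA (c + 1) i)
      = ∑ x ∈ Vk (c + i), (2 * ((if x.2 ≤ x.1 then (2 ^ (c + i) - x.2 : ℚ) else 1) /
            rowWidth (c + i) (BBA c i) x) +
          2 ^ (c + i) * (if x.2 ≤ x.1 then (rowWidth (c + i) (BBA c i) x : ℚ)⁻¹ else 0) +
          ((2 * 2 ^ (c + i) - x.2) / 2 ^ (c + i) + 1)) := by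
        rw [aucPAR2Sum, sum_Vk_succ]
        refine sum_congr rfl fun x hx => ?_
        have hb := mem_Vk.1 hx
        simp only [rowWidth_BBA_succ_ll c i hx, rowWidth_BBA_succ_ur, rowWidth_BBA_succ_lr c i hx,
          rowWidth_BBA_succ_ul c i hx, add_le_add_iff_right]
        rw [if_pos (show x.2 ≤ x.1 + 2 ^ (c + i) by omega),
          if_neg (show ¬ x.2 + 2 ^ (c + i) ≤ x.1 by omega)]
        split_ifs <;> push_cast <;> ring
    _ = _ := by
        rw [sum_add_distrib, sum_add_distrib, sum_add_distrib, ← mul_sum, ← mul_sum, ← sum_div,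
          sum_sub_distrib, sum_snd_Vk, sum_const, sum_const, card_Vk, ← aucPAR2Sum,
          ← lowerInvWidthSum]
        field_simp
        ring

lemma lowerInvWidthSum_BBA (c i : ℕ) :
    lowerInvWidthSum (c + i) (BBA c i) = (c + 2) * 2 ^ (c + i) / 2 := by
  induction c with
  | zero => rw [Nat.zero_add, lowerInvWidthSum_BBA_zero]; push_cast; ring
  | succ c ih =>
    rw [Nat.add_right_comm, lowerInvWidthSum_BBA_succ, ih, pow_succ]
    push_cast
    ring

lemma aucPAR2Sum_BBA (c i : ℕ) :
    aucPAR2Sum (c + i) (BBA c i) = 2 ^ (c + i) * ((c + 5) * 2 ^ (c + i) - 2 ^ i + c) / 4 := by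
  induction c with
  | zero => rw [Nat.zero_add, aucPAR2Sum_BBA_zero]; push_cast; ring
  | succ c ih =>
    rw [Nat.add_right_comm, aucPAR2Sum_BBA_succ, ih, lowerInvWidthSum_BBA, pow_succ]
    push_cast
    ring

/-- with `k = c + i`, the average-case PAR with respect to
party 2 of `T_{c,i}` for `A_k` equals `(c+5)/4 − 1/2^{c+2} + c/2^{k+2}`. -/
theorem stmt15 (c i : ℕ) :
    avgPAR2 (c + i) Auc (BBA c i) =
      ((c : ℚ) + 5) / 4 - 1 / 2 ^ (c + 2) + (c : ℚ) / 2 ^ (c + i + 2) := by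
  rw [avgPAR2_Auc, aucPAR2Sum_BBA]
  field_simp
  ring
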